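/- arXiv:1801.09283 — 3 statements merged into one kernel-verified Lean document; each statement's English description precedes it below -/
import Mathlib

section
/- Let p be a prime number and let δ be a real number with 0 < δ < 1/2. Then there exists a natural number N such that for every natural number n ≥ N the following holds: if V is a finite-dimensional vector space over ZMod p and f : (Fin n → ZMod p) → V is a map such that every element of V equals f(v) for some v of Hamming weight |{i : v i ≠ 0}| ≤ δ·n, then p^{dim V} ≤ p^{3δn} · δ^{−δn}; in particular (dim V)·log p ≤ δ·(3·log p − log δ)·n, with natural logarithms and real powers. -/
/-!
Since `f` maps the Hamming ball of radius `m = ⌊δn⌋` onto `V`, `p ^ dim V` is at most the size of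
that ball. Giving each vector the weight `t ^ (its Hamming weight)`, the total weight of `(ZMod p)ⁿ` is
`(1 + (p - 1) t)ⁿ`, while every vector of the ball weighs at least `t ^ m`. With `t = δ / p` the
ball therefore has at most `(1 + δ)ⁿ (p / δ)ᵐ ≤ e^{δn} p^{δn} δ^{-δn}` elements, and `e ≤ p²`.
-/

open Finset

section HammingBall

variable {ι β : Type*} [Fintype ι] [DecidableEq ι] [Fintype β] [DecidableEq β] [Zero β]

theorem sum_ite_eq_zero_one_else {R : Type*} [CommRing R] (t : R) :
    ∑ a : β, (if a = 0 then 1 else t) = 1 + (Fintype.card β - 1) * t := by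
  rw [Fintype.sum_eq_add_sum_compl 0, if_pos rfl,
    sum_congr rfl fun a ha => if_neg (by simpa using ha), sum_const, card_compl,
    card_singleton, nsmul_eq_mul, Nat.cast_sub Fintype.card_pos, Nat.cast_one]

theorem sum_pow_hammingNorm {R : Type*} [CommRing R] (t : R) :
    ∑ v : ι → β, t ^ hammingNorm v = (1 + (Fintype.card β - 1) * t) ^ Fintype.card ι := by
  have hpow (v : ι → β) : t ^ hammingNorm v = ∏ i, if v i = 0 then 1 else t := by
    rw [hammingNorm, ← prod_const, prod_filter]
    exact prod_congr rfl fun i _ => ite_not _ _ _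
  simp_rw [hpow]
  rw [← Fintype.prod_sum (fun (_ : ι) (a : β) => if a = 0 then (1 : R) else t),
    sum_ite_eq_zero_one_else, prod_const, card_univ]

theorem card_hammingBall_mul_pow_le {t : ℝ} (ht0 : 0 ≤ t) (ht1 : t ≤ 1) (m : ℕ) :
    #{v : ι → β | hammingNorm v ≤ m} * t ^ m ≤ (1 + (Fintype.card β - 1) * t) ^ Fintype.card ι := by
  rw [← sum_pow_hammingNorm, ← nsmul_eq_mul, ← sum_const]
  calc ∑ _v ∈ {v : ι → β | hammingNorm v ≤ m}, t ^ m
      ≤ ∑ v ∈ {v : ι → β | hammingNorm v ≤ m}, t ^ hammingNorm v :=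
        sum_le_sum fun v hv => pow_le_pow_of_le_one ht0 ht1 (mem_filter.1 hv).2
    _ ≤ ∑ v, t ^ hammingNorm v :=
        sum_le_sum_of_subset_of_nonneg (subset_univ _) fun _ _ _ => by positivity

theorem card_hammingBall_le {δ : ℝ} (hδ0 : 0 < δ) (hδ1 : δ ≤ 1) (m : ℕ) :
    (#{v : ι → β | hammingNorm v ≤ m} : ℝ) ≤
      Real.exp (δ * Fintype.card ι) * (Fintype.card β / δ) ^ m := by
  have hq1 : (1 : ℝ) ≤ Fintype.card β := by exact_mod_cast Fintype.card_pos
  have hq : (0 : ℝ) < Fintype.card β := by linarith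
  have hball := card_hammingBall_mul_pow_le (div_nonneg hδ0.le hq.le)
    ((div_le_one hq).2 (hδ1.trans hq1)) m (ι := ι) (β := β)
  have hbase : 1 + (Fintype.card β - 1) * (δ / Fintype.card β) ≤ Real.exp δ := by
    calc _ ≤ 1 + Fintype.card β * (δ / Fintype.card β) := by gcongr; linarith
      _ = 1 + δ := by rw [mul_div_cancel₀ _ hq.ne']
      _ ≤ Real.exp δ := by linarith [Real.add_one_le_exp δ]
  calc (#{v : ι → β | hammingNorm v ≤ m} : ℝ)
      ≤ (1 + (Fintype.card β - 1) * (δ / Fintype.card β)) ^ Fintype.card ι /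
          (δ / Fintype.card β) ^ m := by
        rw [le_div_iff₀ (by positivity)]; exact hball
    _ ≤ Real.exp δ ^ Fintype.card ι / (δ / Fintype.card β) ^ m := by gcongr
    _ = Real.exp (δ * Fintype.card ι) * (Fintype.card β / δ) ^ m := by
        rw [← Real.exp_nat_mul, div_eq_mul_inv, ← inv_pow, inv_div, mul_comm (Fintype.card ι : ℝ)]

theorem card_le_card_hammingBall {V : Type*} [Fintype V] (f : (ι → β) → V) (m : ℕ)
    (hf : ∀ w, ∃ v, hammingNorm v ≤ m ∧ f v = w) :
    Fintype.card V ≤ #{v : ι → β | hammingNorm v ≤ m} := by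
  refine card_le_card_of_surjOn f fun w _ => ?_
  obtain ⟨v, hv, rfl⟩ := hf w
  exact ⟨v, by simpa using hv, rfl⟩

end HammingBall

theorem exp_mul_div_pow_le {q δ x : ℝ} (hq : 2 ≤ q) (hδ0 : 0 < δ) (hδ1 : δ ≤ 1) {m : ℕ}
    (hm : m ≤ x) : Real.exp x * (q / δ) ^ m ≤ q ^ (3 * x) * δ ^ (-x) := by
  have hx : 0 ≤ x := (Nat.cast_nonneg m).trans hm
  have hexp : Real.exp x ≤ q ^ (2 * x) := by
    calc Real.exp x = Real.exp 1 ^ x := by rw [← Real.exp_mul, one_mul]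
      _ ≤ (q ^ (2 : ℝ)) ^ x := by
        gcongr
        calc Real.exp 1 ≤ 2 ^ (2 : ℝ) := by norm_num; linarith [Real.exp_one_lt_d9]
          _ ≤ q ^ (2 : ℝ) := by gcongr
      _ = q ^ (2 * x) := by rw [← Real.rpow_mul (by linarith)]
  have hpow : (q / δ) ^ m ≤ q ^ x * δ ^ (-x) := by
    calc (q / δ) ^ m = (q / δ) ^ (m : ℝ) := (Real.rpow_natCast _ m).symm
      _ ≤ (q / δ) ^ x := Real.rpow_le_rpow_of_exponent_le
          ((one_le_div hδ0).2 (by linarith)) hm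
      _ = q ^ x * δ ^ (-x) := by
        rw [Real.div_rpow (by linarith) hδ0.le, Real.rpow_neg hδ0.le, div_eq_mul_inv]
  calc Real.exp x * (q / δ) ^ m ≤ q ^ (2 * x) * (q ^ x * δ ^ (-x)) := by gcongr
    _ = q ^ (3 * x) * δ ^ (-x) := by
      rw [← mul_assoc, ← Real.rpow_add (by linarith)]; ring_nf

/-- Abstract counting core of Proposition 2.1 of the paper: if every element of a
finite-dimensional `ZMod p`-vector space `V` is the image under `f` of a vector of
Hamming weight at most `δn`, then `p^{dim V} ≤ p^{3δn}·δ^{-δn}`, and in particular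
`(dim V)·log p ≤ δ(3 log p − log δ)·n`. -/
theorem dim_bound_of_short_representatives (p : ℕ) [hp : Fact p.Prime] (δ : ℝ)
    (hδ0 : 0 < δ) (hδ : δ < 1/2) :
    ∃ N : ℕ, ∀ n : ℕ, N ≤ n →
      ∀ (V : Type) [AddCommGroup V] [Module (ZMod p) V] [FiniteDimensional (ZMod p) V]
        (f : (Fin n → ZMod p) → V),
        (∀ w : V, ∃ v : Fin n → ZMod p,
            ((Finset.univ.filter fun i => v i ≠ 0).card : ℝ) ≤ δ * n ∧ f v = w) →
        (p : ℝ) ^ (Module.finrank (ZMod p) V) ≤ (p : ℝ) ^ (3 * δ * n) * δ ^ (-(δ * n)) ∧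
        (Module.finrank (ZMod p) V : ℝ) * Real.log p
          ≤ δ * (3 * Real.log p - Real.log δ) * n := by
  have hp2 : (2 : ℝ) ≤ p := by exact_mod_cast hp.out.two_le
  refine ⟨0, fun n _ V _ _ _ f hf => ?_⟩
  have : Finite V := Module.finite_of_finite (ZMod p)
  let := Fintype.ofFinite V
  set m := ⌊δ * n⌋₊
  have hm : (m : ℝ) ≤ δ * n := Nat.floor_le (by positivity)
  have hcover : ∀ w : V, ∃ v : Fin n → ZMod p, hammingNorm v ≤ m ∧ f v = w := fun w =>
    let ⟨v, hv, hfv⟩ := hf w; ⟨v, Nat.le_floor hv, hfv⟩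
  have hpow_le : (p : ℝ) ^ Module.finrank (ZMod p) V ≤ p ^ (3 * δ * n) * δ ^ (-(δ * n)) := by
    calc (p : ℝ) ^ Module.finrank (ZMod p) V = Fintype.card V := by
          rw [Module.card_eq_pow_finrank (K := ZMod p), ZMod.card]; push_cast; rfl
      _ ≤ #{v : Fin n → ZMod p | hammingNorm v ≤ m} := by
          exact_mod_cast card_le_card_hammingBall f m hcover
      _ ≤ Real.exp (δ * n) * (p / δ) ^ m := by
          simpa using card_hammingBall_le (ι := Fin n) (β := ZMod p) hδ0 (by linarith) m
      _ ≤ p ^ (3 * δ * n) * δ ^ (-(δ * n)) := by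
          rw [mul_assoc]; exact exp_mul_div_pow_le hp2 hδ0 (by linarith) hm
  refine ⟨hpow_le, ?_⟩
  have hlog := Real.log_le_log (by positivity) hpow_le
  rw [Real.log_pow, Real.log_mul (by positivity) (by positivity), Real.log_rpow (by positivity),
    Real.log_rpow hδ0] at hlog
  linarith
end

section
/- Let d ≥ 2 be a natural number and let κ₁, κ₂ be real numbers with 0 < κ₁ < 1 and 0 < κ₂ < 1. Then there exists a constant C > 0 such that for every real number R ≥ 2(1+κ₁+κ₂) and all points x', x'' of EuclideanSpace ℝ (Fin d) with dist x' x'' = 2(R − κ₁/2 − κ₂), writing m = (x'+x'')/2 for their midpoint, the Lebesgue volume of the set { y : dist y x' + dist y x'' < 2R + κ₂/2 } ∩ closedBall m (R − κ₁/2) is at least C · R^{(d+1)/2}, where R^{(d+1)/2} is a real power. -/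
/-!
Let `m ∓ c • u` be the foci (`‖u‖ = 1`). Expanding `‖a • u + v‖` to second order in `v`, the
linear terms cancel between the two foci, so a ball of radius `s` centred at `m + t • u` with
`|t| ≤ c / 2` lies in the ellipsoid as soon as the excess `2 s² / c` fits into the slack of the
sum-of-distances bound. With `s² = c κ₁ / 8 ≍ R`, about `c / (4 s)` disjoint such balls fit along
the major axis, giving volume `≳ (c / s) · s ^ d ≍ R ^ ((d + 1) / 2)`.
-/

open MeasureTheory Metric Set

section Geometry

variable {E : Type*} [NormedAddCommGroup E] [InnerProductSpace ℝ E]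

/-- AM–GM `2 a ‖w‖ ≤ a² + ‖w‖²` for `w = a • u + v`. -/
lemma norm_smul_add_le {u : E} (hu : ‖u‖ = 1) {a : ℝ} (ha : 0 < a) (v : E) :
    ‖a • u + v‖ ≤ a + inner ℝ u v + ‖v‖ ^ 2 / (2 * a) := by
  have hsq : ‖a • u + v‖ ^ 2 = a ^ 2 + 2 * a * inner ℝ u v + ‖v‖ ^ 2 := by
    rw [norm_add_sq_real, norm_smul, real_inner_smul_left, hu, Real.norm_of_nonneg ha.le]
    ring
  refine le_of_mul_le_mul_left ?_ (by positivity : 0 < 2 * a)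
  rw [mul_add, mul_div_cancel₀ _ (by positivity)]
  nlinarith [sq_nonneg (a - ‖a • u + v‖)]

lemma dist_sub_smul_add_dist_add_smul_le {u : E} (hu : ‖u‖ = 1) {a b : ℝ} (ha : 0 < a)
    (hb : 0 < b) (p y : E) :
    dist y (p - a • u) + dist y (p + b • u) ≤
      a + b + dist y p ^ 2 * (1 / (2 * a) + 1 / (2 * b)) := by
  have h₁ := norm_smul_add_le hu ha (y - p)
  have h₂ := norm_smul_add_le (u := -u) (by rw [norm_neg, hu]) hb (y - p)
  rw [inner_neg_left] at h₂
  rw [dist_eq_norm, dist_eq_norm, dist_eq_norm, show y - (p - a • u) = a • u + (y - p) by abel,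
    show y - (p + b • u) = b • -u + (y - p) by rw [smul_neg]; abel]
  linarith [show ‖y - p‖ ^ 2 * (1 / (2 * a) + 1 / (2 * b)) =
    ‖y - p‖ ^ 2 / (2 * a) + ‖y - p‖ ^ 2 / (2 * b) by ring]

lemma ball_add_smul_subset_ellipsoid {u : E} (hu : ‖u‖ = 1) {c s t : ℝ} (hc : 0 < c)
    (hsc : s ≤ c / 2) (ht : |t| ≤ c / 2) (m : E) :
    ball (m + t • u) s ⊆
      {y | dist y (m - c • u) + dist y (m + c • u) < 2 * c + 2 * s ^ 2 / c} ∩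
        closedBall m c := by
  intro y hy
  rw [mem_ball] at hy
  obtain ⟨htl, htr⟩ := abs_le.1 ht
  have hd0 := dist_nonneg (x := y) (y := m + t • u)
  refine ⟨?_, ?_⟩
  · have key := dist_sub_smul_add_dist_add_smul_le hu (a := c + t) (b := c - t)
      (by linarith) (by linarith) (m + t • u) y
    rw [show m + t • u - (c + t) • u = m - c • u by module,
      show m + t • u + (c - t) • u = m + c • u by module] at key
    have hinv : 1 / (2 * (c + t)) + 1 / (2 * (c - t)) ≤ 2 / c := by
      rw [div_add_div _ _ (by linarith) (by linarith), div_le_div_iff₀ (by nlinarith) hc]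
      nlinarith
    have hsq : dist y (m + t • u) ^ 2 < s ^ 2 := by nlinarith
    calc _ ≤ _ := key
      _ ≤ 2 * c + dist y (m + t • u) ^ 2 * (2 / c) := by gcongr; linarith
      _ < 2 * c + s ^ 2 * (2 / c) := by gcongr
      _ = _ := by ring
  · rw [mem_closedBall]
    calc dist y m ≤ dist y (m + t • u) + dist (m + t • u) m := dist_triangle _ _ _
      _ ≤ s + c / 2 := by
        rw [dist_self_add_left, norm_smul, hu, mul_one, Real.norm_eq_abs]
        linarith
      _ ≤ c := by linarith

lemma exists_norm_eq_one_eq_midpoint_sub_smul {x y : E} {c : ℝ} (hc : 0 < c)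
    (hxy : dist x y = 2 * c) :
    ∃ u : E, ‖u‖ = 1 ∧ x = midpoint ℝ x y - c • u ∧ y = midpoint ℝ x y + c • u := by
  refine ⟨(2 * c)⁻¹ • (y - x), ?_, ?_, ?_⟩
  · rw [norm_smul, ← dist_eq_norm, dist_comm, hxy, norm_inv,
      Real.norm_of_nonneg (by positivity), inv_mul_cancel₀ (by positivity)]
  all_goals
    rw [midpoint_eq_smul_add, smul_smul, invOf_eq_inv]
    field_simp
    module

end Geometry

lemma ofReal_div_mul_measure_ball_le {E : Type*} [NormedAddCommGroup E] [NormedSpace ℝ E]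
    [MeasurableSpace E] [BorelSpace E] (μ : Measure E) [μ.IsAddHaarMeasure] {p u : E}
    (hu : ‖u‖ = 1) {s L : ℝ} (hs : 0 < s) (hL : 0 ≤ L) {S : Set E}
    (hS : ∀ t ∈ Icc 0 L, ball (p + t • u) s ⊆ S) :
    ENNReal.ofReal (L / (2 * s)) * μ (ball p s) ≤ μ S := by
  set N := ⌊L / (2 * s)⌋₊ + 1
  have hdisj : (Finset.range N : Set ℕ).PairwiseDisjoint
      fun k : ℕ ↦ ball (p + (2 * s * k) • u) s := by
    intro j _ k _ hjk
    apply ball_disjoint_ball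
    have hjk' : (1 : ℝ) ≤ |(j : ℝ) - k| := by
      have := Int.one_le_abs (sub_ne_zero.2 (Int.ofNat_inj.not.2 hjk))
      exact_mod_cast this
    rw [dist_add_left, dist_eq_norm, ← sub_smul, norm_smul, hu, mul_one, ← mul_sub,
      Real.norm_eq_abs, abs_mul, abs_of_pos (by positivity)]
    nlinarith
  calc ENNReal.ofReal (L / (2 * s)) * μ (ball p s)
      ≤ N * μ (ball p s) := by
        gcongr
        rw [← ENNReal.ofReal_natCast]
        exact ENNReal.ofReal_le_ofReal (by simpa [N] using (Nat.lt_floor_add_one _).le)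
    _ = ∑ k ∈ Finset.range N, μ (ball (p + (2 * s * k) • u) s) := by
        simp [Measure.addHaar_ball_center μ _ s]
    _ = μ (⋃ k ∈ Finset.range N, ball (p + (2 * s * k) • u) s) :=
        (measure_biUnion_finset hdisj fun _ _ ↦ measurableSet_ball).symm
    _ ≤ μ S := by
        refine measure_mono (iUnion₂_subset fun k hk ↦ hS _ ⟨by positivity, ?_⟩)
        have hk : (k : ℝ) ≤ L / (2 * s) := by
          have hkN : k ≤ ⌊L / (2 * s)⌋₊ := Nat.lt_succ_iff.1 (Finset.mem_range.1 hk)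
          exact (Nat.le_floor_iff (by positivity)).1 hkN
        rwa [le_div_iff₀ (by positivity), mul_comm] at hk

lemma rpow_le_div_mul_sqrt_mul_pow (d : ℕ) {c k R : ℝ} (hc : 0 < c) (hk : 0 < k)
    (hR₀ : 0 ≤ R) (hR : R ≤ 2 * c) :
    k ^ (((d : ℝ) - 1) / 2) / 4 / 2 ^ (((d : ℝ) + 1) / 2) * R ^ (((d : ℝ) + 1) / 2) ≤
      c / 2 / (2 * √(c * k)) * √(c * k) ^ d := by
  have hck : 0 < c * k := mul_pos hc hk
  have hpow : √(c * k) ^ d / √(c * k) = (c * k) ^ (((d : ℝ) - 1) / 2) := by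
    rw [Real.sqrt_eq_rpow, ← Real.rpow_natCast, ← Real.rpow_mul hck.le, ← Real.rpow_sub hck]
    ring_nf
  have hc' : c * c ^ (((d : ℝ) - 1) / 2) = c ^ (((d : ℝ) + 1) / 2) := by
    rw [show ((d : ℝ) + 1) / 2 = 1 + ((d : ℝ) - 1) / 2 by ring, Real.rpow_add hc, Real.rpow_one]
  calc _ = k ^ (((d : ℝ) - 1) / 2) / 4 * (R / 2) ^ (((d : ℝ) + 1) / 2) := by
        rw [Real.div_rpow hR₀ zero_le_two]; ring
    _ ≤ k ^ (((d : ℝ) - 1) / 2) / 4 * c ^ (((d : ℝ) + 1) / 2) := by gcongr; linarith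
    _ = c / 4 * (√(c * k) ^ d / √(c * k)) := by
        rw [hpow, Real.mul_rpow hc.le hk.le, ← hc']; ring
    _ = _ := by ring

theorem ellipsoid_cap_volume_lower_bound_general (d : ℕ) (κ₁ κ₂ : ℝ)
    (h10 : 0 < κ₁) (h20 : 0 < κ₂) :
    ∃ C : ℝ, 0 < C ∧ ∀ R : ℝ, 2 * (1 + κ₁ + κ₂) ≤ R →
      ∀ x' x'' : EuclideanSpace ℝ (Fin d), dist x' x'' = 2 * (R - κ₁ / 2 - κ₂) →
        ENNReal.ofReal (C * R ^ (((d : ℝ) + 1) / 2)) ≤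
          volume ({y : EuclideanSpace ℝ (Fin d) | dist y x' + dist y x'' < 2 * R + κ₂ / 2}
            ∩ Metric.closedBall (midpoint ℝ x' x'') (R - κ₁ / 2)) := by
  set ω := (volume (ball (0 : EuclideanSpace ℝ (Fin d)) 1)).toReal
  have hω : 0 < ω :=
    ENNReal.toReal_pos (measure_ball_pos _ _ one_pos).ne' measure_ball_lt_top.ne
  refine ⟨(κ₁ / 8) ^ (((d : ℝ) - 1) / 2) / 4 / 2 ^ (((d : ℝ) + 1) / 2) * ω, by positivity, ?_⟩
  intro R hR x' x'' hdist
  set c := R - κ₁ / 2 - κ₂ with hc_def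
  have hc : 0 < c := by linarith
  set s := √(c * (κ₁ / 8))
  have hs : 0 < s := by positivity
  have hs2 : s ^ 2 = c * (κ₁ / 8) := Real.sq_sqrt (by positivity)
  have hsc : s ≤ c / 2 := by nlinarith
  have : Nontrivial (EuclideanSpace ℝ (Fin d)) :=
    nontrivial_of_ne x' x'' (dist_pos.1 (by linarith))
  obtain ⟨u, hu, hx', hx''⟩ := exists_norm_eq_one_eq_midpoint_sub_smul hc hdist
  set m := midpoint ℝ x' x''
  have htube : ∀ t ∈ Icc 0 (c / 2), ball (m + t • u) s ⊆
      {y | dist y x' + dist y x'' < 2 * R + κ₂ / 2} ∩ closedBall m (R - κ₁ / 2) := by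
    intro t ht
    have ht' : |t| ≤ c / 2 := abs_le.2 ⟨by linarith [ht.1], ht.2⟩
    refine (ball_add_smul_subset_ellipsoid hu hc hsc ht' m).trans
      (inter_subset_inter (fun y hy ↦ ?_) (closedBall_subset_closedBall (by linarith)))
    have hκ : 2 * s ^ 2 / c = κ₁ / 4 := by rw [hs2]; field_simp; ring
    rw [← hx', ← hx'', mem_ofPred_eq, hκ] at hy
    exact hy.trans_le (by linarith)
  calc ENNReal.ofReal (_ * R ^ (((d : ℝ) + 1) / 2))
      ≤ ENNReal.ofReal (c / 2 / (2 * s) * s ^ d * ω) := by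
        rw [mul_right_comm]
        refine ENNReal.ofReal_le_ofReal (mul_le_mul_of_nonneg_right ?_ hω.le)
        exact rpow_le_div_mul_sqrt_mul_pow d hc (by positivity) (by linarith) (by linarith)
    _ = ENNReal.ofReal (c / 2 / (2 * s)) * volume (ball m s) := by
        rw [Measure.addHaar_ball _ _ hs.le, finrank_euclideanSpace_fin,
          ENNReal.ofReal_mul (by positivity), ENNReal.ofReal_mul (by positivity),
          ENNReal.ofReal_toReal measure_ball_lt_top.ne, mul_assoc]
    _ ≤ _ := ofReal_div_mul_measure_ball_le volume hu hs (by positivity) htube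

/-- Euclidean volume estimate at the core of Lemma 3.4 of the paper: for `d ≥ 2` and
`0 < κ₁, κ₂ < 1` there is `C > 0` such that for all `R ≥ 2(1+κ₁+κ₂)` and foci `x', x''`
at distance `2(R-κ₁/2-κ₂)`, the solid open ellipsoid with sum-of-distances bound
`2R+κ₂/2` intersected with the closed ball of radius `R-κ₁/2` about the midpoint of the
foci has volume at least `C·R^{(d+1)/2}`. -/
theorem ellipsoid_cap_volume_lower_bound (d : ℕ) (hd : 2 ≤ d) (κ₁ κ₂ : ℝ)
    (h10 : 0 < κ₁) (h11 : κ₁ < 1) (h20 : 0 < κ₂) (h21 : κ₂ < 1) :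
    ∃ C : ℝ, 0 < C ∧ ∀ R : ℝ, 2 * (1 + κ₁ + κ₂) ≤ R →
      ∀ x' x'' : EuclideanSpace ℝ (Fin d), dist x' x'' = 2 * (R - κ₁ / 2 - κ₂) →
        ENNReal.ofReal (C * R ^ (((d : ℝ) + 1) / 2)) ≤
          volume ({y : EuclideanSpace ℝ (Fin d) | dist y x' + dist y x'' < 2 * R + κ₂ / 2}
            ∩ Metric.closedBall (midpoint ℝ x' x'') (R - κ₁ / 2)) :=
  ellipsoid_cap_volume_lower_bound_general d κ₁ κ₂ h10 h20
end

section
/- Let d ≥ 2 be a natural number, let R' > 0 be a real number, and let p₁, q₁, p₂, q₂ be points of EuclideanSpace ℝ (Fin d) with ‖p₁‖ = ‖q₁‖ = ‖p₂‖ = ‖q₂‖ = R'. Suppose that for each i ∈ {1,2} there is a point xᵢ on the segment [pᵢ, qᵢ] with ‖xᵢ‖ ≤ R'/5. Then min( dist p₁ p₂ + dist q₁ q₂ , dist p₁ q₂ + dist q₁ p₂ ) ≤ dist p₁ q₁ + dist p₂ q₂ − R'/10. -/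
/-!
For `‖p‖ = ‖q‖` the midpoint of `[p, q]` is the point of the chord closest to the center, so a
chord passing within `R/5` of the center has `‖p + q‖ ≤ 2R/5`; by the parallelogram law it is then
longer than `39R/20`. If both chords are of this kind, `⟪p₁, p₂⟫ + ⟪p₁, q₂⟫ = ⟪p₁, p₂ + q₂⟫ ≥ -2R²/5`,
so `p₁` makes an inner product `≥ -R²/5` with one endpoint of the second chord, which is therefore
within `31R/20` of `p₁`. Reconnecting along that short edge and bounding the other new edge by the
diameter `2R` gives total length `≤ 71R/20 ≤ 78R/20 - R/10`.
-/

open scoped RealInnerProductSpace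

variable {E : Type*} [NormedAddCommGroup E] [InnerProductSpace ℝ E]

theorem norm_add_le_two_mul_norm_lineMap {p q : E} (hpq : ‖p‖ = ‖q‖) (t : ℝ) :
    ‖p + q‖ ≤ 2 * ‖AffineMap.lineMap p q t‖ := by
  set x := AffineMap.lineMap p q t with hx
  have hortho : ⟪p + q, (2 * t - 1) • (q - p)⟫ = 0 := by
    rw [inner_smul_right, add_comm p q, (real_inner_add_sub_eq_zero_iff q p).2 hpq.symm,
      mul_zero]
  have htwo : (2 : ℝ) • x = (p + q) + (2 * t - 1) • (q - p) := by
    rw [hx, AffineMap.lineMap_apply_module']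
    module
  have hsq : ‖p + q‖ * ‖p + q‖ ≤ ‖(2 : ℝ) • x‖ * ‖(2 : ℝ) • x‖ := by
    rw [htwo, norm_add_sq_eq_norm_sq_add_norm_sq_real hortho]
    exact le_add_of_nonneg_right (mul_self_nonneg _)
  rwa [← mul_self_le_mul_self_iff (norm_nonneg _) (norm_nonneg _), norm_smul,
    Real.norm_two] at hsq

theorem norm_add_le_two_mul_norm_of_mem_segment {p q x : E} (hpq : ‖p‖ = ‖q‖)
    (hx : x ∈ segment ℝ p q) : ‖p + q‖ ≤ 2 * ‖x‖ := by
  rw [segment_eq_image_lineMap] at hx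
  obtain ⟨t, -, rfl⟩ := hx
  exact norm_add_le_two_mul_norm_lineMap hpq t

variable {R : ℝ}

theorem le_dist_of_norm_add_le {p q : E} (hp : ‖p‖ = R) (hq : ‖q‖ = R)
    (h : ‖p + q‖ ≤ 2 / 5 * R) : 39 / 20 * R ≤ dist p q := by
  have hR : 0 ≤ R := hp ▸ norm_nonneg p
  have hpar := parallelogram_law_with_norm ℝ p q
  rw [hp, hq, ← dist_eq_norm] at hpar
  nlinarith [norm_nonneg (p + q), dist_nonneg (x := p) (y := q)]

theorem dist_le_of_neg_le_inner {p q : E} (hp : ‖p‖ = R) (hq : ‖q‖ = R)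
    (h : -(R ^ 2 / 5) ≤ ⟪p, q⟫) : dist p q ≤ 31 / 20 * R := by
  have hR : 0 ≤ R := hp ▸ norm_nonneg p
  have hsq := norm_sub_sq_real p q
  rw [hp, hq, ← dist_eq_norm] at hsq
  nlinarith [dist_nonneg (x := p) (y := q)]

theorem dist_add_dist_le_of_neg_le_inner {p₁ q₁ p₂ q₂ : E} (hp₁ : ‖p₁‖ = R)
    (hq₁ : ‖q₁‖ = R) (hp₂ : ‖p₂‖ = R) (hq₂ : ‖q₂‖ = R)
    (hL₁ : 39 / 20 * R ≤ dist p₁ q₁) (hL₂ : 39 / 20 * R ≤ dist p₂ q₂)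
    (h : -(R ^ 2 / 5) ≤ ⟪p₁, p₂⟫) :
    dist p₁ p₂ + dist q₁ q₂ ≤ dist p₁ q₁ + dist p₂ q₂ - R / 10 := by
  have hR : 0 ≤ R := hp₁ ▸ norm_nonneg p₁
  have hshort := dist_le_of_neg_le_inner hp₁ hp₂ h
  have hdiam : dist q₁ q₂ ≤ 2 * R := by
    linarith [dist_le_norm_add_norm q₁ q₂]
  linarith

theorem chord_surgery_general (d : ℕ) (R' : ℝ)
    (p₁ q₁ p₂ q₂ : EuclideanSpace ℝ (Fin d))
    (hp₁ : ‖p₁‖ = R') (hq₁ : ‖q₁‖ = R') (hp₂ : ‖p₂‖ = R') (hq₂ : ‖q₂‖ = R')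
    (h1 : ∃ x₁ ∈ segment ℝ p₁ q₁, ‖x₁‖ ≤ R' / 5)
    (h2 : ∃ x₂ ∈ segment ℝ p₂ q₂, ‖x₂‖ ≤ R' / 5) :
    min (dist p₁ p₂ + dist q₁ q₂) (dist p₁ q₂ + dist q₁ p₂)
      ≤ dist p₁ q₁ + dist p₂ q₂ - R' / 10 := by
  obtain ⟨x₁, hx₁, hx₁R⟩ := h1
  obtain ⟨x₂, hx₂, hx₂R⟩ := h2
  have hm₁ : ‖p₁ + q₁‖ ≤ 2 / 5 * R' := by
    linarith [norm_add_le_two_mul_norm_of_mem_segment (hp₁.trans hq₁.symm) hx₁]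
  have hm₂ : ‖p₂ + q₂‖ ≤ 2 / 5 * R' := by
    linarith [norm_add_le_two_mul_norm_of_mem_segment (hp₂.trans hq₂.symm) hx₂]
  have hL₁ := le_dist_of_norm_add_le hp₁ hq₁ hm₁
  have hL₂ := le_dist_of_norm_add_le hp₂ hq₂ hm₂
  have hsum : -(2 / 5 * R' ^ 2) ≤ ⟪p₁, p₂⟫ + ⟪p₁, q₂⟫ := by
    have := (abs_le.1 (abs_real_inner_le_norm p₁ (p₂ + q₂))).1
    rw [inner_add_right, hp₁] at this
    nlinarith [norm_nonneg (p₂ + q₂)]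
  rcases le_or_gt (-(R' ^ 2 / 5)) ⟪p₁, p₂⟫ with h | h
  · exact min_le_of_left_le
      (dist_add_dist_le_of_neg_le_inner hp₁ hq₁ hp₂ hq₂ hL₁ hL₂ h)
  · refine min_le_of_right_le ?_
    rw [← dist_comm q₂ p₂] at hL₂ ⊢
    exact dist_add_dist_le_of_neg_le_inner hp₁ hq₁ hq₂ hp₂ hL₁ hL₂ (by linarith)

/-- Quantitative Euclidean surgery step of Lemma 3.3 of the paper: two chords of the
sphere of radius `R'` both passing within `R'/5` of the center can be cut and reconnected
in one of the two possible ways so that the total length decreases by at least `R'/10`. -/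
theorem chord_surgery (d : ℕ) (hd : 2 ≤ d) (R' : ℝ) (hR' : 0 < R')
    (p₁ q₁ p₂ q₂ : EuclideanSpace ℝ (Fin d))
    (hp₁ : ‖p₁‖ = R') (hq₁ : ‖q₁‖ = R') (hp₂ : ‖p₂‖ = R') (hq₂ : ‖q₂‖ = R')
    (h1 : ∃ x₁ ∈ segment ℝ p₁ q₁, ‖x₁‖ ≤ R' / 5)
    (h2 : ∃ x₂ ∈ segment ℝ p₂ q₂, ‖x₂‖ ≤ R' / 5) :
    min (dist p₁ p₂ + dist q₁ q₂) (dist p₁ q₂ + dist q₁ p₂)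
      ≤ dist p₁ q₁ + dist p₂ q₂ - R' / 10 :=
  chord_surgery_general d R' p₁ q₁ p₂ q₂ hp₁ hq₁ hp₂ hq₂ h1 h2
end
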